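/- arXiv:2303.12687 — 3 statements merged into one kernel-verified Lean document; each statement's English description precedes it below -/
import Mathlib

section
/- For every measurable g : 𝒱 → ℝ such that the displayed random variables are integrable, E[(A·Y/π(X) − (1−A)·Y/(1−π(X)) − (Y¹−Y⁰))·g(V)] = 0. -/
open MeasureTheory ProbabilityTheory

/-!
The error of the pseudo-outcome factors as `(Y¹/π(X) + Y⁰/(1−π(X))) · (A − π(X))`.
Conditional exchangeability upgrades `π(X) = E[A | X]` to `π(X) = E[A | X, Y⁰, Y¹]`,
while `g(V)` and the first factor are functions of `(X, Y⁰, Y¹)`; so the integrand is a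
function of `(X, Y⁰, Y¹)` times `A` minus its conditional expectation given `(X, Y⁰, Y¹)`,
whose integral vanishes.
-/

/-- The inverse-probability-weighted pseudo-outcome `A·Y/π(X) − (1−A)·Y/(1−π(X))`. -/
noncomputable def ipwPseudo {Ω 𝓧 : Type*} (A Y : Ω → ℝ) (X : Ω → 𝓧) (pr : 𝓧 → ℝ)
    (ω : Ω) : ℝ :=
  A ω * Y ω / pr (X ω) - (1 - A ω) * Y ω / (1 - pr (X ω))

namespace MeasurableSpace

variable {Ω : Type*}

lemma isPiSystem_image2_inter_measurableSet (m₁ m₂ : MeasurableSpace Ω) :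
    IsPiSystem (Set.image2 (· ∩ ·) {s | MeasurableSet[m₁] s} {t | MeasurableSet[m₂] t}) := by
  rintro _ ⟨s, hs, t, ht, rfl⟩ _ ⟨s', hs', t', ht', rfl⟩ -
  exact ⟨s ∩ s', hs.inter hs', t ∩ t', ht.inter ht', Set.inter_inter_inter_comm s s' t t'⟩

lemma generateFrom_image2_inter_measurableSet (m₁ m₂ : MeasurableSpace Ω) :
    generateFrom
      (Set.image2 (· ∩ ·) {s | MeasurableSet[m₁] s} {t | MeasurableSet[m₂] t}) = m₁ ⊔ m₂ := by
  refine le_antisymm (generateFrom_le ?_) (sup_le (fun s hs => ?_) fun t ht => ?_)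
  · rintro _ ⟨s, hs, t, ht, rfl⟩
    exact (le_sup_left (b := m₂) _ hs).inter (le_sup_right (a := m₁) _ ht)
  · exact measurableSet_generateFrom
      ⟨s, hs, Set.univ, MeasurableSet.univ, Set.inter_univ s⟩
  · exact measurableSet_generateFrom
      ⟨Set.univ, MeasurableSet.univ, t, ht, Set.univ_inter t⟩

end MeasurableSpace

namespace MeasureTheory

variable {Ω E : Type*} [NormedAddCommGroup E] [NormedSpace ℝ E] [CompleteSpace E]
  {m m₀ : MeasurableSpace Ω} {μ : Measure Ω}

theorem ae_eq_condExp_of_forall_setIntegral_eq_of_isPiSystem (hm : m ≤ m₀)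
    [SigmaFinite (μ.trim hm)] {S : Set (Set Ω)} (hS_gen : m = MeasurableSpace.generateFrom S)
    (hS : IsPiSystem S) {f g : Ω → E} (hf : Integrable f μ) (hg : Integrable g μ)
    (hgm : StronglyMeasurable[m] g) (h_univ : ∫ x, g x ∂μ = ∫ x, f x ∂μ)
    (h_eq : ∀ s ∈ S, ∫ x in s, g x ∂μ = ∫ x in s, f x ∂μ) :
    g =ᵐ[μ] μ[f | m] := by
  have h_all : ∀ s, MeasurableSet[m] s → ∫ x in s, g x ∂μ = ∫ x in s, f x ∂μ := by
    intro s hs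
    induction s, hs using MeasurableSpace.induction_on_inter hS_gen hS with
    | empty => simp
    | basic t ht => exact h_eq t ht
    | compl t ht iht =>
      rw [setIntegral_compl (hm _ ht) hg, setIntegral_compl (hm _ ht) hf, h_univ, iht]
    | iUnion t htd htm iht =>
      rw [integral_iUnion (fun i => hm _ (htm i)) htd hg.integrableOn,
        integral_iUnion (fun i => hm _ (htm i)) htd hf.integrableOn]
      exact tsum_congr iht
  exact ae_eq_condExp_of_forall_setIntegral_eq hm hf (fun _ _ _ => hg.integrableOn)
    (fun s hs _ => h_all s hs) hgm.aestronglyMeasurable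

theorem setIntegral_inter_eq_setIntegral_mul_condExp [IsFiniteMeasure μ] (hm : m ≤ m₀)
    {h : Ω → ℝ} (hhm : StronglyMeasurable[m] h) (hh : Integrable h μ) {s r : Set Ω}
    (hs : MeasurableSet[m] s) (hr : MeasurableSet r) :
    ∫ x in s ∩ r, h x ∂μ = ∫ x in s, h x * (μ⟦r | m⟧) x ∂μ := by
  have h_ind : r.indicator h = h * r.indicator fun _ => 1 := by
    ext x; by_cases hx : x ∈ r <;> simp [hx]
  have h_int : Integrable (h * r.indicator fun _ => 1) μ := h_ind ▸ hh.indicator hr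
  rw [← setIntegral_indicator hr, h_ind, ← setIntegral_condExp hm h_int hs]
  refine setIntegral_congr_ae (hm _ hs) ?_
  filter_upwards [condExp_mul_of_stronglyMeasurable_left hhm h_int
    ((integrable_const (1 : ℝ)).indicator hr)] with x hx _
  exact hx

theorem integral_mul_sub_eq_zero_of_ae_eq_condExp (hm : m ≤ m₀) [SigmaFinite (μ.trim hm)]
    {F f g : Ω → ℝ} (hF : StronglyMeasurable[m] F) (hf : Integrable f μ)
    (hg : g =ᵐ[μ] μ[f | m]) (hFfg : Integrable (F * (f - g)) μ) :
    ∫ x, F x * (f x - g x) ∂μ = 0 := by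
  have hg_int : Integrable g μ := integrable_condExp.congr hg.symm
  have h_zero : μ[f - g | m] =ᵐ[μ] 0 := by
    have h_cond : μ[g | m] =ᵐ[μ] μ[f | m] :=
      (condExp_congr_ae hg).trans (condExp_condExp_of_le le_rfl hm)
    filter_upwards [condExp_sub hf hg_int m, h_cond] with x hx hx'
    simp [hx, hx']
  calc ∫ x, F x * (f x - g x) ∂μ = ∫ x, (μ[F * (f - g) | m]) x ∂μ :=
        (integral_condExp hm).symm
    _ = ∫ x, (F * μ[f - g | m]) x ∂μ :=
        integral_congr_ae (condExp_mul_of_stronglyMeasurable_left hF hFfg (hf.sub hg_int))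
    _ = ∫ _, (0 : ℝ) ∂μ := integral_congr_ae (h_zero.mono fun x hx => by simp [hx])
    _ = 0 := integral_zero _ _

end MeasureTheory

namespace ProbabilityTheory

variable {Ω β : Type*} {m' m₁ m₂ mΩ : MeasurableSpace Ω} [StandardBorelSpace Ω]
  {hm' : m' ≤ mΩ} {μ : Measure Ω} [IsFiniteMeasure μ]

theorem CondIndep.condExp_indicator_ae_eq_sup (h : CondIndep m' m₁ m₂ hm' μ)
    (hm₁ : m₁ ≤ mΩ) (hm₂ : m₂ ≤ mΩ) {t : Set Ω} (ht : MeasurableSet[m₂] t) :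
    μ⟦t | m'⟧ =ᵐ[μ] μ⟦t | m' ⊔ m₁⟧ := by
  have h_mul := (condIndep_iff m' m₁ m₂ hm' hm₁ hm₂ μ).mp h
  refine ae_eq_condExp_of_forall_setIntegral_eq_of_isPiSystem (sup_le hm' hm₁)
    (MeasurableSpace.generateFrom_image2_inter_measurableSet m' m₁).symm
    (MeasurableSpace.isPiSystem_image2_inter_measurableSet m' m₁)
    ((integrable_const (1 : ℝ)).indicator (hm₂ _ ht)) integrable_condExp
    (stronglyMeasurable_condExp.mono le_sup_left) (integral_condExp hm') ?_
  rintro _ ⟨s, hs, r, hr, rfl⟩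
  calc ∫ x in s ∩ r, (μ⟦t | m'⟧) x ∂μ = ∫ x in s, (μ⟦t | m'⟧) x * (μ⟦r | m'⟧) x ∂μ :=
        setIntegral_inter_eq_setIntegral_mul_condExp hm' stronglyMeasurable_condExp
          integrable_condExp hs (hm₁ _ hr)
    _ = ∫ x in s, (μ⟦r ∩ t | m'⟧) x ∂μ := by
        refine setIntegral_congr_ae (hm' _ hs) ?_
        filter_upwards [h_mul r t hr ht] with x hx _
        rw [hx, Pi.mul_apply, mul_comm]
    _ = ∫ x in s ∩ r, t.indicator (fun _ => 1) x ∂μ := by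
        have h_int := (integrable_const (μ := μ) (1 : ℝ)).indicator ((hm₁ _ hr).inter (hm₂ _ ht))
        rw [setIntegral_condExp hm' h_int hs, ← Set.indicator_indicator,
          setIntegral_indicator (hm₁ _ hr)]

theorem CondIndepFun.condExp_sup_comap_ae_eq [MeasurableSpace β] {W : Ω → β} {A : Ω → ℝ}
    (h : CondIndepFun m' hm' W A μ) (hW : Measurable W) (hA : Measurable A)
    (hA01 : ∀ ω, A ω = 0 ∨ A ω = 1) :
    μ[A | m' ⊔ MeasurableSpace.comap W inferInstance] =ᵐ[μ] μ[A | m'] := by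
  have hA_ind : A = (A ⁻¹' {1}).indicator fun _ => 1 := by
    ext ω; rcases hA01 ω with hω | hω <;> simp [hω]
  rw [hA_ind]
  exact (CondIndep.condExp_indicator_ae_eq_sup ((condIndepFun_iff_condIndep m' hm' W A μ).mp h)
    hW.comap_le hA.comap_le ⟨{1}, measurableSet_singleton 1, rfl⟩).symm

end ProbabilityTheory

lemma ipwPseudo_sub_eq_mul {Ω 𝓧 : Type*} {A Y Y0 Y1 : Ω → ℝ} {X : Ω → 𝓧} {pr : 𝓧 → ℝ} {ω : Ω}
    (hA : A ω = 0 ∨ A ω = 1) (hY : Y ω = A ω * Y1 ω + (1 - A ω) * Y0 ω)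
    (hpr : 0 < pr (X ω) ∧ pr (X ω) < 1) :
    ipwPseudo A Y X pr ω - (Y1 ω - Y0 ω)
      = (Y1 ω / pr (X ω) + Y0 ω / (1 - pr (X ω))) * (A ω - pr (X ω)) := by
  have h₀ : pr (X ω) ≠ 0 := hpr.1.ne'
  have h₁ : 1 - pr (X ω) ≠ 0 := sub_ne_zero.mpr hpr.2.ne'
  rcases hA with h | h <;> simp only [ipwPseudo, hY, h] <;> field_simp <;> ring

theorem stmt1_general {Ω 𝓧 𝓥 : Type*} [MeasurableSpace Ω] [StandardBorelSpace Ω]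
    [MeasurableSpace 𝓧] [MeasurableSpace 𝓥]
    (P : Measure Ω) [IsProbabilityMeasure P]
    (X : Ω → 𝓧) (hX : Measurable X) (v : 𝓧 → 𝓥) (hv : Measurable v)
    (A Y0 Y1 Y : Ω → ℝ) (hA : Measurable A) (hY0 : Measurable Y0) (hY1 : Measurable Y1)
    (hA01 : ∀ ω, A ω = 0 ∨ A ω = 1)
    (hYdef : ∀ ω, Y ω = A ω * Y1 ω + (1 - A ω) * Y0 ω)
    (pr : 𝓧 → ℝ) (hprm : Measurable pr) (hpr : ∀ x, 0 < pr x ∧ pr x < 1)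
    (hprCE : (fun ω => pr (X ω)) =ᵐ[P] P[A | MeasurableSpace.comap X inferInstance])
    (hCE : CondIndepFun (MeasurableSpace.comap X inferInstance) hX.comap_le
      (fun ω => (Y0 ω, Y1 ω)) A P)
    (g : 𝓥 → ℝ) (hg : Measurable g)
    (hI : Integrable (fun ω => (ipwPseudo A Y X pr ω - (Y1 ω - Y0 ω)) * g (v (X ω))) P) :
    ∫ ω, (ipwPseudo A Y X pr ω - (Y1 ω - Y0 ω)) * g (v (X ω)) ∂P = 0 := by
  have hW : Measurable fun ω => (Y0 ω, Y1 ω) := hY0.prodMk hY1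
  set mX := MeasurableSpace.comap X inferInstance
  set mW := MeasurableSpace.comap (fun ω => (Y0 ω, Y1 ω)) inferInstance
  have h_prop : (fun ω => pr (X ω)) =ᵐ[P] P[A | mX ⊔ mW] :=
    hprCE.trans (hCE.condExp_sup_comap_ae_eq hW hA hA01).symm
  have h_weight : StronglyMeasurable[mX ⊔ mW]
      fun ω => g (v (X ω)) * (Y1 ω / pr (X ω) + Y0 ω / (1 - pr (X ω))) := by
    have hXm : Measurable[mX ⊔ mW] X := (comap_measurable X).mono le_sup_left le_rfl
    have hWm : Measurable[mX ⊔ mW] fun ω => (Y0 ω, Y1 ω) :=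
      (comap_measurable _).mono le_sup_right le_rfl
    have hπ : Measurable[mX ⊔ mW] fun ω => pr (X ω) := hprm.comp hXm
    exact ((hg.comp (hv.comp hXm)).mul (((measurable_snd.comp hWm).div hπ).add
      ((measurable_fst.comp hWm).div (measurable_const.sub hπ)))).stronglyMeasurable
  have hA_int : Integrable A P := Integrable.of_bound hA.aestronglyMeasurable 1
    (ae_of_all _ fun ω => by rcases hA01 ω with h | h <;> simp [h])
  have h_factor : ∀ ω, (ipwPseudo A Y X pr ω - (Y1 ω - Y0 ω)) * g (v (X ω))
      = g (v (X ω)) * (Y1 ω / pr (X ω) + Y0 ω / (1 - pr (X ω))) * (A ω - pr (X ω)) := by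
    intro ω
    rw [ipwPseudo_sub_eq_mul (hA01 ω) (hYdef ω) (hpr (X ω))]
    ring
  rw [integral_congr_ae (ae_of_all _ h_factor)]
  exact integral_mul_sub_eq_zero_of_ae_eq_condExp (sup_le hX.comap_le hW.comap_le) h_weight
    hA_int h_prop (hI.congr (ae_of_all _ h_factor))

/-- the error of the IPW pseudo-outcome relative to the individual treatment
effect is orthogonal to every measurable function of `V`. -/
theorem stmt1 {Ω 𝓧 𝓥 : Type*} [MeasurableSpace Ω] [StandardBorelSpace Ω]
    [MeasurableSpace 𝓧] [MeasurableSpace 𝓥]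
    (P : Measure Ω) [IsProbabilityMeasure P]
    (X : Ω → 𝓧) (hX : Measurable X) (v : 𝓧 → 𝓥) (hv : Measurable v)
    (A Y0 Y1 Y : Ω → ℝ) (hA : Measurable A) (hY0 : Measurable Y0) (hY1 : Measurable Y1)
    (hA01 : ∀ ω, A ω = 0 ∨ A ω = 1)
    (hYdef : ∀ ω, Y ω = A ω * Y1 ω + (1 - A ω) * Y0 ω)
    (pr : 𝓧 → ℝ) (hprm : Measurable pr) (hpr : ∀ x, 0 < pr x ∧ pr x < 1)
    (hprCE : (fun ω => pr (X ω)) =ᵐ[P] P[A | MeasurableSpace.comap X inferInstance])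
    (hCE : CondIndepFun (MeasurableSpace.comap X inferInstance) hX.comap_le
      (fun ω => (Y0 ω, Y1 ω)) A P)
    (g : 𝓥 → ℝ) (hg : Measurable g)
    (hI : Integrable (fun ω => (ipwPseudo A Y X pr ω - (Y1 ω - Y0 ω)) * g (v (X ω))) P)
    (hI' : Integrable (fun ω => ipwPseudo A Y X pr ω - (Y1 ω - Y0 ω)) P) :
    ∫ ω, (ipwPseudo A Y X pr ω - (Y1 ω - Y0 ω)) * g (v (X ω)) ∂P = 0 :=
  stmt1_general P X hX v hv A Y0 Y1 Y hA hY0 hY1 hA01 hYdef pr hprm hpr hprCE hCE g hg hI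
end

section
/- For every measurable g : 𝒱 → ℝ (with all expectations below finite), E[w·(φ − g(V))²] = E[λ(π(X))·((Y¹−Y⁰) − g(V))²] + E[w·(φ − (Y¹−Y⁰))²] + 2·E[w·(φ − (Y¹−Y⁰))·(Y¹−Y⁰)]. In particular, since the last two terms do not depend on g, the weighted population risk g ↦ E[w·(φ − g(V))²] and the λ-weighted oracle risk g ↦ E[λ(π(X))·((Y¹−Y⁰) − g(V))²] have the same minimizers over any class of functions. -/
open MeasureTheory ProbabilityTheory Filter Set

set_option linter.unusedSectionVars false


open MeasureTheory ProbabilityTheory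

/-- The weight `w = (A − π(X))·λ'(π(X)) + λ(π(X))`. -/
noncomputable def wFun {Ω 𝓧 : Type*} (lam lam' : ℝ → ℝ) (A : Ω → ℝ) (X : Ω → 𝓧)
    (p : 𝓧 → ℝ) (ω : Ω) : ℝ :=
  (A ω - p (X ω)) * lam' (p (X ω)) + lam (p (X ω))

/-- The pseudo-outcome
`φ = (λ(π(X))/w)·[(A/π(X))(Y − Q¹(X)) − ((1−A)/(1−π(X)))(Y − Q⁰(X))] + Q¹(X) − Q⁰(X)`. -/
noncomputable def phiFun {Ω 𝓧 : Type*} (lam lam' : ℝ → ℝ) (A Y : Ω → ℝ) (X : Ω → 𝓧)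
    (p q0 q1 : 𝓧 → ℝ) (ω : Ω) : ℝ :=
  lam (p (X ω)) / wFun lam lam' A X p ω *
      (A ω / p (X ω) * (Y ω - q1 (X ω)) - (1 - A ω) / (1 - p (X ω)) * (Y ω - q0 (X ω)))
    + q1 (X ω) - q0 (X ω)

section AuxLemmas

variable {Ω 𝓧 : Type*} [MeasurableSpace Ω] [StandardBorelSpace Ω] [MeasurableSpace 𝓧]
  {P : Measure Ω} [IsProbabilityMeasure P]
  {X : Ω → 𝓧} {A Y0 Y1 : Ω → ℝ} {pr : 𝓧 → ℝ}

lemma integrableA (hA : Measurable A) (hA01 : ∀ ω, A ω = 0 ∨ A ω = 1) :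
    Integrable A P := by
  refine Integrable.mono' (integrable_const 1) hA.aestronglyMeasurable
    (Filter.Eventually.of_forall fun ω => ?_)
  rcases hA01 ω with h | h <;> simp [h]

lemma integrablePr (hX : Measurable X) (hprm : Measurable pr)
    (hpr : ∀ x, 0 < pr x ∧ pr x < 1) :
    Integrable (fun ω => pr (X ω)) P := by
  refine Integrable.mono' (integrable_const 1) (hprm.comp hX).aestronglyMeasurable
    (Filter.Eventually.of_forall fun ω => ?_)
  rw [Real.norm_eq_abs, abs_le]
  constructor <;> [linarith [(hpr (X ω)).1]; linarith [(hpr (X ω)).2]]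

/-- Key fact: conditional exchangeability extends the propensity score conditional
expectation to the larger σ-algebra generated by `(X, Y0, Y1)`. -/
lemma condexpA_big (hX : Measurable X) (hA : Measurable A) (hY0 : Measurable Y0)
    (hY1 : Measurable Y1) (hA01 : ∀ ω, A ω = 0 ∨ A ω = 1)
    (hprm : Measurable pr) (hpr : ∀ x, 0 < pr x ∧ pr x < 1)
    (hprCE : (fun ω => pr (X ω)) =ᵐ[P] P[A | MeasurableSpace.comap X inferInstance])
    (hCE : CondIndepFun (MeasurableSpace.comap X inferInstance) hX.comap_le
      (fun ω => (Y0 ω, Y1 ω)) A P) :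
    (fun ω => pr (X ω)) =ᵐ[P]
      P[A | MeasurableSpace.comap (fun ω => (X ω, Y0 ω, Y1 ω)) inferInstance] := by
  set G : Ω → ℝ × ℝ := fun ω => (Y0 ω, Y1 ω) with hG_def
  have hG : Measurable G := hY0.prodMk hY1
  set T : Ω → 𝓧 × ℝ × ℝ := fun ω => (X ω, Y0 ω, Y1 ω) with hT_def
  have hT : Measurable T := hX.prodMk hG
  have hn : MeasurableSpace.comap T inferInstance ≤ ‹MeasurableSpace Ω› := hT.comap_le
  have hm : MeasurableSpace.comap X inferInstance ≤ ‹MeasurableSpace Ω› := hX.comap_le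
  have hAi : Integrable A P := integrableA hA hA01
  have hpri : Integrable (fun ω => pr (X ω)) P := integrablePr hX hprm hpr
  have hCE' := (condIndepFun_iff_condExp_inter_preimage_eq_mul (μ := P)
      (hm' := hX.comap_le) hG hA).mp hCE
  -- main set computation
  have main : ∀ B : Set (𝓧 × ℝ × ℝ), MeasurableSet B →
      ∫ ω in T ⁻¹' B, pr (X ω) ∂P = ∫ ω in T ⁻¹' B, A ω ∂P := by
    refine MeasurableSpace.induction_on_inter generateFrom_prod.symm isPiSystem_prod ?_ ?_ ?_ ?_
    · simp
    · rintro t ⟨B1, hB1, B2, hB2, rfl⟩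
      have hs1 : MeasurableSet[MeasurableSpace.comap X inferInstance] (X ⁻¹' B1) :=
        ⟨B1, hB1, rfl⟩
      have hs1' : MeasurableSet (X ⁻¹' B1) := hm _ hs1
      have hs2 : MeasurableSet (G ⁻¹' B2) := hG hB2
      have hpre : T ⁻¹' (B1 ×ˢ B2) = X ⁻¹' B1 ∩ G ⁻¹' B2 := by
        ext ω; simp [hT_def, hG_def, Set.mem_prod]
      rw [hpre]
      -- indicator of s2
      set I2 : Ω → ℝ := (G ⁻¹' B2).indicator (fun _ => (1:ℝ)) with hI2_def
      have hI2int : Integrable I2 P := (integrable_const 1).indicator hs2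
      have hprodint : Integrable ((fun ω => pr (X ω)) * I2) P := by
        refine Integrable.mono' (integrable_const 1)
          (((hprm.comp hX).aestronglyMeasurable).mul hI2int.1)
          (Filter.Eventually.of_forall fun ω => ?_)
        have h1 : |pr (X ω)| ≤ 1 := by
          rw [abs_le]; constructor <;> [linarith [(hpr (X ω)).1]; linarith [(hpr (X ω)).2]]
        have h2 : |I2 ω| ≤ 1 := by
          rw [hI2_def]; by_cases h : ω ∈ G ⁻¹' B2 <;> simp [h]
        calc ‖(((fun ω => pr (X ω)) * I2)) ω‖ = |pr (X ω)| * |I2 ω| := by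
              simp [Real.norm_eq_abs, abs_mul]
          _ ≤ 1 * 1 := mul_le_mul h1 h2 (abs_nonneg _) zero_le_one
          _ = 1 := by ring
      have hAind : (A ⁻¹' {1}).indicator (fun _ => (1:ℝ)) = A := by
        funext ω; rcases hA01 ω with h | h <;> simp [Set.indicator, h]
      -- LHS
      have hLHS : ∫ ω in X ⁻¹' B1 ∩ G ⁻¹' B2, pr (X ω) ∂P
          = ∫ ω in X ⁻¹' B1, ((fun ω => pr (X ω)) * (P[I2 | MeasurableSpace.comap X
              inferInstance])) ω ∂P := by
        rw [← setIntegral_indicator hs2]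
        have heq : (G ⁻¹' B2).indicator (fun ω => pr (X ω))
            = (fun ω => pr (X ω)) * I2 := by
          funext ω; by_cases h : ω ∈ G ⁻¹' B2 <;> simp [hI2_def, h]
        rw [heq, ← setIntegral_condExp hm hprodint hs1]
        refine setIntegral_congr_ae hs1' ?_
        filter_upwards [condExp_mul_of_stronglyMeasurable_left
          ((hprm.comp (comap_measurable X)).stronglyMeasurable) hprodint hI2int] with ω hω _
        exact hω
      -- RHS
      have hRHS : ∫ ω in X ⁻¹' B1 ∩ G ⁻¹' B2, A ω ∂P
          = ∫ ω in X ⁻¹' B1, ((P[I2 | MeasurableSpace.comap X inferInstance]) ω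
              * pr (X ω)) ∂P := by
        rw [← setIntegral_indicator hs2]
        have heq : (G ⁻¹' B2).indicator A
            = (G ⁻¹' B2 ∩ A ⁻¹' {1}).indicator (fun _ => (1:ℝ)) := by
          funext ω
          by_cases h2 : ω ∈ G ⁻¹' B2 <;> rcases hA01 ω with h | h <;>
            simp [Set.indicator, h, h2]
        have hintind : Integrable ((G ⁻¹' B2 ∩ A ⁻¹' {1}).indicator (fun _ => (1:ℝ))) P :=
          (integrable_const 1).indicator (hs2.inter (hA (measurableSet_singleton 1)))
        rw [heq, ← setIntegral_condExp hm hintind hs1]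
        refine setIntegral_congr_ae hs1' ?_
        have h1 := hCE' B2 {1} hB2 (measurableSet_singleton 1)
        have h2 : P[(A ⁻¹' {1}).indicator (fun _ => (1:ℝ)) | MeasurableSpace.comap X
            inferInstance] =ᵐ[P] fun ω => pr (X ω) := by
          rw [hAind]; exact hprCE.symm
        filter_upwards [h1, h2] with ω hω1 hω2 _
        rw [hω1, hω2]
      rw [hLHS, hRHS]
      refine setIntegral_congr_ae hs1' (Filter.Eventually.of_forall fun ω _ => ?_)
      simp [mul_comm]
    · intro t htm iht
      have htot : ∫ ω, pr (X ω) ∂P = ∫ ω, A ω ∂P := by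
        rw [integral_congr_ae hprCE]; exact integral_condExp hm
      have : T ⁻¹' tᶜ = (T ⁻¹' t)ᶜ := rfl
      rw [this, setIntegral_compl (hT htm) hpri, setIntegral_compl (hT htm) hAi, iht, htot]
    · intro f hdisj hmeas ihf
      rw [Set.preimage_iUnion,
        integral_iUnion (fun i => hT (hmeas i)) (fun i j hij => (hdisj hij).preimage T)
          (hpri.integrableOn),
        integral_iUnion (fun i => hT (hmeas i)) (fun i j hij => (hdisj hij).preimage T)
          (hAi.integrableOn)]
      exact tsum_congr ihf
  -- conclude via uniqueness of conditional expectation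
  refine ae_eq_condExp_of_forall_setIntegral_eq hn hAi
    (fun s _ _ => hpri.integrableOn) ?_ ?_
  · rintro s ⟨B, hB, rfl⟩ _
    exact main B hB
  · refine StronglyMeasurable.aestronglyMeasurable ?_
    exact ((hprm.comp measurable_fst).comp (comap_measurable T)).stronglyMeasurable

/-- Bounded case of the master lemma. -/
lemma master_bounded (hX : Measurable X) (hA : Measurable A) (hY0 : Measurable Y0)
    (hY1 : Measurable Y1) (hA01 : ∀ ω, A ω = 0 ∨ A ω = 1)
    (hprm : Measurable pr) (hpr : ∀ x, 0 < pr x ∧ pr x < 1)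
    (hprCE : (fun ω => pr (X ω)) =ᵐ[P] P[A | MeasurableSpace.comap X inferInstance])
    (hCE : CondIndepFun (MeasurableSpace.comap X inferInstance) hX.comap_le
      (fun ω => (Y0 ω, Y1 ω)) A P)
    (f : 𝓧 × ℝ × ℝ → ℝ) (hf : Measurable f) (C : ℝ) (hC : ∀ z, |f z| ≤ C) :
    ∫ ω, (A ω - pr (X ω)) * f (X ω, Y0 ω, Y1 ω) ∂P = 0 := by
  have hT : Measurable (fun ω => (X ω, Y0 ω, Y1 ω) : Ω → 𝓧 × ℝ × ℝ) :=
    hX.prodMk (hY0.prodMk hY1)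
  have hn : MeasurableSpace.comap (fun ω => (X ω, Y0 ω, Y1 ω)) inferInstance
      ≤ ‹MeasurableSpace Ω› := hT.comap_le
  have hAi : Integrable A P := integrableA hA hA01
  have hpri : Integrable (fun ω => pr (X ω)) P := integrablePr hX hprm hpr
  have hd : Integrable (A - fun ω => pr (X ω)) P := hAi.sub hpri
  have hFsm : StronglyMeasurable[MeasurableSpace.comap (fun ω => (X ω, Y0 ω, Y1 ω))
      inferInstance] (fun ω => f (X ω, Y0 ω, Y1 ω)) :=
    (hf.comp (comap_measurable (fun ω => (X ω, Y0 ω, Y1 ω)))).stronglyMeasurable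
  have hFm : Measurable (fun ω => f (X ω, Y0 ω, Y1 ω)) := hf.comp hT
  have hprodint : Integrable ((fun ω => f (X ω, Y0 ω, Y1 ω)) * (A - fun ω => pr (X ω))) P := by
    refine Integrable.mono' (integrable_const (|C| * 2))
      (hFm.aestronglyMeasurable.mul hd.1)
      (Filter.Eventually.of_forall fun ω => ?_)
    have h1 : |f (X ω, Y0 ω, Y1 ω)| ≤ |C| := le_trans (hC _) (le_abs_self C)
    have h2 : |A ω - pr (X ω)| ≤ 2 := by
      rcases hpr (X ω) with ⟨ha, hb⟩
      rcases hA01 ω with h | h <;> rw [abs_le] <;> constructor <;> simp [h] <;> linarith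
    calc ‖((fun ω => f (X ω, Y0 ω, Y1 ω)) * (A - fun ω => pr (X ω))) ω‖
        = |f (X ω, Y0 ω, Y1 ω)| * |A ω - pr (X ω)| := by
          simp [Real.norm_eq_abs, abs_mul]
      _ ≤ |C| * 2 := mul_le_mul h1 h2 (abs_nonneg _) (abs_nonneg _)
  have hcd : P[A - (fun ω => pr (X ω)) | MeasurableSpace.comap (fun ω => (X ω, Y0 ω, Y1 ω))
      inferInstance] =ᵐ[P] fun _ => (0:ℝ) := by
    have h1 := condExp_sub (m := MeasurableSpace.comap (fun ω => (X ω, Y0 ω, Y1 ω))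
      inferInstance) hAi hpri (μ := P)
    have h2 := (condexpA_big hX hA hY0 hY1 hA01 hprm hpr hprCE hCE).symm
    have h3 : P[(fun ω => pr (X ω)) | MeasurableSpace.comap (fun ω => (X ω, Y0 ω, Y1 ω))
        inferInstance] = fun ω => pr (X ω) :=
      condExp_of_stronglyMeasurable hn
        (((hprm.comp measurable_fst).comp
          (comap_measurable (fun ω => (X ω, Y0 ω, Y1 ω)))).stronglyMeasurable) hpri
    filter_upwards [h1, h2] with ω hω1 hω2
    rw [hω1, Pi.sub_apply, hω2, h3]
    ring
  have hpull := condExp_mul_of_stronglyMeasurable_left (μ := P) hFsm hprodint hd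
  calc ∫ ω, (A ω - pr (X ω)) * f (X ω, Y0 ω, Y1 ω) ∂P
      = ∫ ω, ((fun ω => f (X ω, Y0 ω, Y1 ω)) * (A - fun ω => pr (X ω))) ω ∂P := by
        refine integral_congr_ae (Filter.Eventually.of_forall fun ω => ?_)
        simp [mul_comm]
    _ = ∫ ω, (P[(fun ω => f (X ω, Y0 ω, Y1 ω)) * (A - fun ω => pr (X ω))
          | MeasurableSpace.comap (fun ω => (X ω, Y0 ω, Y1 ω)) inferInstance]) ω ∂P :=
        (integral_condExp hn).symm
    _ = 0 := by
        have h0 : (P[(fun ω => f (X ω, Y0 ω, Y1 ω)) * (A - fun ω => pr (X ω))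
            | MeasurableSpace.comap (fun ω => (X ω, Y0 ω, Y1 ω)) inferInstance])
            =ᵐ[P] fun _ => (0:ℝ) := by
          filter_upwards [hpull, hcd] with ω hω1 hω2
          rw [hω1, Pi.mul_apply, hω2]
          ring
        rw [integral_congr_ae h0, integral_zero]

/-- Master lemma: expectation of `(A - π(X))·f(X,Y0,Y1)` vanishes. -/
lemma master (hX : Measurable X) (hA : Measurable A) (hY0 : Measurable Y0)
    (hY1 : Measurable Y1) (hA01 : ∀ ω, A ω = 0 ∨ A ω = 1)
    (hprm : Measurable pr) (hpr : ∀ x, 0 < pr x ∧ pr x < 1)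
    (hprCE : (fun ω => pr (X ω)) =ᵐ[P] P[A | MeasurableSpace.comap X inferInstance])
    (hCE : CondIndepFun (MeasurableSpace.comap X inferInstance) hX.comap_le
      (fun ω => (Y0 ω, Y1 ω)) A P)
    (f : 𝓧 × ℝ × ℝ → ℝ) (hf : Measurable f)
    (hint : Integrable (fun ω => (A ω - pr (X ω)) * f (X ω, Y0 ω, Y1 ω)) P) :
    ∫ ω, (A ω - pr (X ω)) * f (X ω, Y0 ω, Y1 ω) ∂P = 0 := by
  have habs : ∀ (n : ℕ) (y : ℝ), |max (-(n:ℝ)) (min y n)| ≤ |y| := by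
    intro n y
    rw [abs_le]
    constructor
    · refine le_max_of_le_right (le_min (neg_abs_le y) ?_)
      exact le_trans (neg_nonpos.mpr (abs_nonneg y)) (Nat.cast_nonneg n)
    · refine max_le ?_ (le_trans (min_le_left _ _) (le_abs_self y))
      exact le_trans (neg_nonpos.mpr (Nat.cast_nonneg n)) (abs_nonneg y)
  have hfnm : ∀ n : ℕ, Measurable (fun z : 𝓧 × ℝ × ℝ => max (-(n:ℝ)) (min (f z) n)) :=
    fun n => measurable_const.max (hf.min measurable_const)
  have hzero : ∀ n : ℕ,
      ∫ ω, (A ω - pr (X ω)) * max (-(n:ℝ)) (min (f (X ω, Y0 ω, Y1 ω)) n) ∂P = 0 := by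
    intro n
    refine master_bounded hX hA hY0 hY1 hA01 hprm hpr hprCE hCE
      (fun z => max (-(n:ℝ)) (min (f z) n)) (hfnm n) n (fun z => ?_)
    rw [abs_le]
    refine ⟨le_max_left _ _, max_le ?_ (min_le_right _ _)⟩
    exact le_trans (neg_nonpos.mpr (Nat.cast_nonneg n)) (Nat.cast_nonneg n)
  have htend : Filter.Tendsto
      (fun n : ℕ => ∫ ω, (A ω - pr (X ω)) * max (-(n:ℝ)) (min (f (X ω, Y0 ω, Y1 ω)) n) ∂P)
      Filter.atTop (nhds (∫ ω, (A ω - pr (X ω)) * f (X ω, Y0 ω, Y1 ω) ∂P)) := by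
    refine tendsto_integral_of_dominated_convergence
      (fun ω => |(A ω - pr (X ω)) * f (X ω, Y0 ω, Y1 ω)|) ?_ hint.abs ?_ ?_
    · intro n
      exact ((hA.sub (hprm.comp hX)).mul
        ((hfnm n).comp (hX.prodMk (hY0.prodMk hY1)))).aestronglyMeasurable
    · intro n
      refine Filter.Eventually.of_forall fun ω => ?_
      simp only [Real.norm_eq_abs, abs_mul]
      exact mul_le_mul_of_nonneg_left (habs n _) (abs_nonneg _)
    · refine Filter.Eventually.of_forall fun ω => ?_
      refine tendsto_atTop_of_eventually_const (i₀ := ⌈|f (X ω, Y0 ω, Y1 ω)|⌉₊) fun n hn => ?_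
      have h1 : |f (X ω, Y0 ω, Y1 ω)| ≤ (n:ℝ) :=
        le_trans (Nat.le_ceil _) (Nat.cast_le.mpr hn)
      rw [min_eq_left (le_trans (le_abs_self _) h1),
        max_eq_right (le_trans (neg_le_neg h1) (neg_abs_le _))]
  have hconst : Filter.Tendsto
      (fun n : ℕ => ∫ ω, (A ω - pr (X ω)) * max (-(n:ℝ)) (min (f (X ω, Y0 ω, Y1 ω)) n) ∂P)
      Filter.atTop (nhds 0) := by
    simpa [hzero] using (tendsto_const_nhds :
      Filter.Tendsto (fun _ : ℕ => (0:ℝ)) Filter.atTop (nhds 0))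
  exact (tendsto_nhds_unique htend hconst)

lemma ptw_real (a p l l' y0 y1 q0 q1 gg : ℝ) (ha : a = 0 ∨ a = 1) (hp0 : p ≠ 0)
    (hp1 : 1 - p ≠ 0) (hwne : (a - p) * l' + l ≠ 0) :
    ((a - p) * l' + l - l) * (y1 - y0 - gg) ^ 2
      - 2 * (((a - p) * l' + l) *
          ((l / ((a - p) * l' + l) *
              (a / p * (a * y1 + (1 - a) * y0 - q1)
                - (1 - a) / (1 - p) * (a * y1 + (1 - a) * y0 - q0)) + q1 - q0)
            - (y1 - y0)) * gg)
    = (a - p) * (l' * (y1 - y0 - gg) ^ 2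
        - 2 * (gg * ((l / p - l') * (y1 - q1) + (l / (1 - p) + l') * (y0 - q0)))) := by
  set w : ℝ := (a - p) * l' + l with hw
  rcases ha with h | h <;> subst h <;> field_simp <;> rw [hw] <;> ring

theorem stmt11_aux {Ω 𝓧 𝓥 : Type*} [MeasurableSpace Ω] [StandardBorelSpace Ω]
    [MeasurableSpace 𝓧] [MeasurableSpace 𝓥]
    (P : Measure Ω) [IsProbabilityMeasure P]
    (X : Ω → 𝓧) (hX : Measurable X) (v : 𝓧 → 𝓥) (hv : Measurable v)
    (A Y0 Y1 Y : Ω → ℝ) (hA : Measurable A) (hY0 : Measurable Y0) (hY1 : Measurable Y1)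
    (hA01 : ∀ ω, A ω = 0 ∨ A ω = 1)
    (hYdef : ∀ ω, Y ω = A ω * Y1 ω + (1 - A ω) * Y0 ω)
    (pr : 𝓧 → ℝ) (hprm : Measurable pr) (hpr : ∀ x, 0 < pr x ∧ pr x < 1)
    (hprCE : (fun ω => pr (X ω)) =ᵐ[P] P[A | MeasurableSpace.comap X inferInstance])
    (hCE : CondIndepFun (MeasurableSpace.comap X inferInstance) hX.comap_le
      (fun ω => (Y0 ω, Y1 ω)) A P)
    (Q0 Q1 : 𝓧 → ℝ) (hQ0m : Measurable Q0) (hQ1m : Measurable Q1)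
    (lam lam' : ℝ → ℝ) (hlam : ∀ p, HasDerivAt lam (lam' p) p) (hlam' : Continuous lam')
    (hw : ∀ᵐ ω ∂P, wFun lam lam' A X pr ω ≠ 0)
    (g : 𝓥 → ℝ) (hg : Measurable g)
    (hI1 : Integrable (fun ω => wFun lam lam' A X pr ω *
      (phiFun lam lam' A Y X pr Q0 Q1 ω - g (v (X ω))) ^ 2) P)
    (hI2 : Integrable (fun ω => lam (pr (X ω)) * ((Y1 ω - Y0 ω) - g (v (X ω))) ^ 2) P)
    (hI3 : Integrable (fun ω => wFun lam lam' A X pr ω *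
      (phiFun lam lam' A Y X pr Q0 Q1 ω - (Y1 ω - Y0 ω)) ^ 2) P)
    (hI4 : Integrable (fun ω => wFun lam lam' A X pr ω *
      (phiFun lam lam' A Y X pr Q0 Q1 ω - (Y1 ω - Y0 ω)) * (Y1 ω - Y0 ω)) P)
    (hI5 : Integrable (fun ω => wFun lam lam' A X pr ω *
      (phiFun lam lam' A Y X pr Q0 Q1 ω - (Y1 ω - Y0 ω)) * g (v (X ω))) P) :
    (∫ ω, wFun lam lam' A X pr ω *
        (phiFun lam lam' A Y X pr Q0 Q1 ω - g (v (X ω))) ^ 2 ∂P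
      = ∫ ω, lam (pr (X ω)) * ((Y1 ω - Y0 ω) - g (v (X ω))) ^ 2 ∂P
        + ∫ ω, wFun lam lam' A X pr ω *
            (phiFun lam lam' A Y X pr Q0 Q1 ω - (Y1 ω - Y0 ω)) ^ 2 ∂P
        + 2 * ∫ ω, wFun lam lam' A X pr ω *
            (phiFun lam lam' A Y X pr Q0 Q1 ω - (Y1 ω - Y0 ω)) * (Y1 ω - Y0 ω) ∂P) := by
  have hlamc : Continuous lam := by
    rw [continuous_iff_continuousAt]
    exact fun p => (hlam p).continuousAt
  -- the auxiliary function on 𝓧 × ℝ × ℝ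
  set f : 𝓧 × ℝ × ℝ → ℝ := fun z =>
    lam' (pr z.1) * (z.2.2 - z.2.1 - g (v z.1)) ^ 2
      - 2 * (g (v z.1) * ((lam (pr z.1) / pr z.1 - lam' (pr z.1)) * (z.2.2 - Q1 z.1)
          + (lam (pr z.1) / (1 - pr z.1) + lam' (pr z.1)) * (z.2.1 - Q0 z.1))) with hf_def
  have hf : Measurable f := by
    have m1 : Measurable fun z : 𝓧 × ℝ × ℝ => pr z.1 := hprm.comp measurable_fst
    have mg : Measurable fun z : 𝓧 × ℝ × ℝ => g (v z.1) :=
      (hg.comp hv).comp measurable_fst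
    have my0 : Measurable fun z : 𝓧 × ℝ × ℝ => z.2.1 := measurable_fst.comp measurable_snd
    have my1 : Measurable fun z : 𝓧 × ℝ × ℝ => z.2.2 := measurable_snd.comp measurable_snd
    have mq0 : Measurable fun z : 𝓧 × ℝ × ℝ => Q0 z.1 := hQ0m.comp measurable_fst
    have mq1 : Measurable fun z : 𝓧 × ℝ × ℝ => Q1 z.1 := hQ1m.comp measurable_fst
    have mlam : Measurable fun z : 𝓧 × ℝ × ℝ => lam (pr z.1) := hlamc.measurable.comp m1
    have mlam' : Measurable fun z : 𝓧 × ℝ × ℝ => lam' (pr z.1) := hlam'.measurable.comp m1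
    exact ((mlam'.mul (((my1.sub my0).sub mg).pow_const 2)).sub
      ((measurable_const.mul (mg.mul ((((mlam.div m1).sub mlam').mul (my1.sub mq1)).add
        (((mlam.div (measurable_const.sub m1)).add mlam').mul (my0.sub mq0)))))))
  -- the N function and its a.e. identification
  set N : Ω → ℝ := fun ω =>
    (wFun lam lam' A X pr ω - lam (pr (X ω))) * ((Y1 ω - Y0 ω) - g (v (X ω))) ^ 2
      - 2 * (wFun lam lam' A X pr ω *
          (phiFun lam lam' A Y X pr Q0 Q1 ω - (Y1 ω - Y0 ω)) * g (v (X ω))) with hN_def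
  have hae : N =ᵐ[P] fun ω => (A ω - pr (X ω)) * f (X ω, Y0 ω, Y1 ω) := by
    filter_upwards [hw] with ω hwω
    have hp0 : pr (X ω) ≠ 0 := (hpr (X ω)).1.ne'
    have hp1 : (1 : ℝ) - pr (X ω) ≠ 0 := sub_ne_zero_of_ne (hpr (X ω)).2.ne'
    have := ptw_real (A ω) (pr (X ω)) (lam (pr (X ω))) (lam' (pr (X ω)))
      (Y0 ω) (Y1 ω) (Q0 (X ω)) (Q1 (X ω)) (g (v (X ω))) (hA01 ω) hp0 hp1 hwω
    simp only [hN_def, hf_def, wFun, phiFun, hYdef ω]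
    convert this using 3 <;> ring
  have hNint : Integrable N P := by
    have hrepr : N = fun ω =>
        wFun lam lam' A X pr ω * (phiFun lam lam' A Y X pr Q0 Q1 ω - g (v (X ω))) ^ 2
          - wFun lam lam' A X pr ω *
              (phiFun lam lam' A Y X pr Q0 Q1 ω - (Y1 ω - Y0 ω)) ^ 2
          - 2 * (wFun lam lam' A X pr ω *
              (phiFun lam lam' A Y X pr Q0 Q1 ω - (Y1 ω - Y0 ω)) * (Y1 ω - Y0 ω))
          - lam (pr (X ω)) * ((Y1 ω - Y0 ω) - g (v (X ω))) ^ 2 := by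
      funext ω; simp only [hN_def]; ring
    rw [hrepr]
    exact ((hI1.sub hI3).sub (hI4.const_mul 2)).sub hI2
  have hNzero : ∫ ω, N ω ∂P = 0 := by
    rw [integral_congr_ae hae]
    exact master hX hA hY0 hY1 hA01 hprm hpr hprCE hCE f hf (hNint.congr hae)
  have hptw : ∀ ω, wFun lam lam' A X pr ω *
      (phiFun lam lam' A Y X pr Q0 Q1 ω - g (v (X ω))) ^ 2
      = wFun lam lam' A X pr ω *
          (phiFun lam lam' A Y X pr Q0 Q1 ω - (Y1 ω - Y0 ω)) ^ 2
        + 2 * (wFun lam lam' A X pr ω *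
            (phiFun lam lam' A Y X pr Q0 Q1 ω - (Y1 ω - Y0 ω)) * (Y1 ω - Y0 ω))
        + lam (pr (X ω)) * ((Y1 ω - Y0 ω) - g (v (X ω))) ^ 2
        + N ω := by
    intro ω; simp only [hN_def]; ring
  have e0 : ∫ ω, wFun lam lam' A X pr ω *
      (phiFun lam lam' A Y X pr Q0 Q1 ω - g (v (X ω))) ^ 2 ∂P
      = ∫ ω, (wFun lam lam' A X pr ω *
            (phiFun lam lam' A Y X pr Q0 Q1 ω - (Y1 ω - Y0 ω)) ^ 2
          + 2 * (wFun lam lam' A X pr ω *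
              (phiFun lam lam' A Y X pr Q0 Q1 ω - (Y1 ω - Y0 ω)) * (Y1 ω - Y0 ω))
          + lam (pr (X ω)) * ((Y1 ω - Y0 ω) - g (v (X ω))) ^ 2
          + N ω) ∂P := integral_congr_ae (Filter.Eventually.of_forall hptw)
  have e1 : ∫ ω, (wFun lam lam' A X pr ω *
            (phiFun lam lam' A Y X pr Q0 Q1 ω - (Y1 ω - Y0 ω)) ^ 2
          + 2 * (wFun lam lam' A X pr ω *
              (phiFun lam lam' A Y X pr Q0 Q1 ω - (Y1 ω - Y0 ω)) * (Y1 ω - Y0 ω))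
          + lam (pr (X ω)) * ((Y1 ω - Y0 ω) - g (v (X ω))) ^ 2
          + N ω) ∂P
      = ∫ ω, (wFun lam lam' A X pr ω *
            (phiFun lam lam' A Y X pr Q0 Q1 ω - (Y1 ω - Y0 ω)) ^ 2
          + 2 * (wFun lam lam' A X pr ω *
              (phiFun lam lam' A Y X pr Q0 Q1 ω - (Y1 ω - Y0 ω)) * (Y1 ω - Y0 ω))
          + lam (pr (X ω)) * ((Y1 ω - Y0 ω) - g (v (X ω))) ^ 2) ∂P + ∫ ω, N ω ∂P :=
    integral_add ((hI3.add (hI4.const_mul 2)).add hI2) hNint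
  have e2 : ∫ ω, (wFun lam lam' A X pr ω *
            (phiFun lam lam' A Y X pr Q0 Q1 ω - (Y1 ω - Y0 ω)) ^ 2
          + 2 * (wFun lam lam' A X pr ω *
              (phiFun lam lam' A Y X pr Q0 Q1 ω - (Y1 ω - Y0 ω)) * (Y1 ω - Y0 ω))
          + lam (pr (X ω)) * ((Y1 ω - Y0 ω) - g (v (X ω))) ^ 2) ∂P
      = ∫ ω, (wFun lam lam' A X pr ω *
            (phiFun lam lam' A Y X pr Q0 Q1 ω - (Y1 ω - Y0 ω)) ^ 2
          + 2 * (wFun lam lam' A X pr ω *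
              (phiFun lam lam' A Y X pr Q0 Q1 ω - (Y1 ω - Y0 ω)) * (Y1 ω - Y0 ω))) ∂P
        + ∫ ω, lam (pr (X ω)) * ((Y1 ω - Y0 ω) - g (v (X ω))) ^ 2 ∂P :=
    integral_add (hI3.add (hI4.const_mul 2)) hI2
  have e3 : ∫ ω, (wFun lam lam' A X pr ω *
            (phiFun lam lam' A Y X pr Q0 Q1 ω - (Y1 ω - Y0 ω)) ^ 2
          + 2 * (wFun lam lam' A X pr ω *
              (phiFun lam lam' A Y X pr Q0 Q1 ω - (Y1 ω - Y0 ω)) * (Y1 ω - Y0 ω))) ∂P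
      = ∫ ω, wFun lam lam' A X pr ω *
            (phiFun lam lam' A Y X pr Q0 Q1 ω - (Y1 ω - Y0 ω)) ^ 2 ∂P
        + ∫ ω, 2 * (wFun lam lam' A X pr ω *
            (phiFun lam lam' A Y X pr Q0 Q1 ω - (Y1 ω - Y0 ω)) * (Y1 ω - Y0 ω)) ∂P :=
    integral_add hI3 (hI4.const_mul 2)
  have e4 : ∫ ω, 2 * (wFun lam lam' A X pr ω *
        (phiFun lam lam' A Y X pr Q0 Q1 ω - (Y1 ω - Y0 ω)) * (Y1 ω - Y0 ω)) ∂P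
      = 2 * ∫ ω, wFun lam lam' A X pr ω *
        (phiFun lam lam' A Y X pr Q0 Q1 ω - (Y1 ω - Y0 ω)) * (Y1 ω - Y0 ω) ∂P :=
    integral_const_mul 2 _
  rw [e0, e1, e2, e3, e4, hNzero]
  ring


end AuxLemmas

/-- Lemma 3: the Neyman-orthogonal weighted population risk decomposes as
the `λ`-weighted oracle risk plus terms not depending on `g`; hence the two risks have the
same minimizers. -/
theorem stmt11 {Ω 𝓧 𝓥 : Type*} [MeasurableSpace Ω] [StandardBorelSpace Ω]
    [MeasurableSpace 𝓧] [MeasurableSpace 𝓥]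
    (P : Measure Ω) [IsProbabilityMeasure P]
    (X : Ω → 𝓧) (hX : Measurable X) (v : 𝓧 → 𝓥) (hv : Measurable v)
    (A Y0 Y1 Y : Ω → ℝ) (hA : Measurable A) (hY0 : Measurable Y0) (hY1 : Measurable Y1)
    (hA01 : ∀ ω, A ω = 0 ∨ A ω = 1)
    (hYdef : ∀ ω, Y ω = A ω * Y1 ω + (1 - A ω) * Y0 ω)
    (pr : 𝓧 → ℝ) (hprm : Measurable pr) (hpr : ∀ x, 0 < pr x ∧ pr x < 1)
    (hprCE : (fun ω => pr (X ω)) =ᵐ[P] P[A | MeasurableSpace.comap X inferInstance])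
    (hCE : CondIndepFun (MeasurableSpace.comap X inferInstance) hX.comap_le
      (fun ω => (Y0 ω, Y1 ω)) A P)
    (Q0 Q1 : 𝓧 → ℝ) (hQ0m : Measurable Q0) (hQ1m : Measurable Q1)
    (hQ1 : P[fun ω => A ω * (Y ω - Q1 (X ω)) | MeasurableSpace.comap X inferInstance]
      =ᵐ[P] fun _ => (0 : ℝ))
    (hQ0 : P[fun ω => (1 - A ω) * (Y ω - Q0 (X ω)) | MeasurableSpace.comap X inferInstance]
      =ᵐ[P] fun _ => (0 : ℝ))
    (lam lam' : ℝ → ℝ) (hlam : ∀ p, HasDerivAt lam (lam' p) p) (hlam' : Continuous lam')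
    (hw : ∀ᵐ ω ∂P, wFun lam lam' A X pr ω ≠ 0)
    (g g' : 𝓥 → ℝ) (hg : Measurable g) (hg' : Measurable g')
    (hI1 : Integrable (fun ω => wFun lam lam' A X pr ω *
      (phiFun lam lam' A Y X pr Q0 Q1 ω - g (v (X ω))) ^ 2) P)
    (hI1' : Integrable (fun ω => wFun lam lam' A X pr ω *
      (phiFun lam lam' A Y X pr Q0 Q1 ω - g' (v (X ω))) ^ 2) P)
    (hI2 : Integrable (fun ω => lam (pr (X ω)) * ((Y1 ω - Y0 ω) - g (v (X ω))) ^ 2) P)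
    (hI2' : Integrable (fun ω => lam (pr (X ω)) * ((Y1 ω - Y0 ω) - g' (v (X ω))) ^ 2) P)
    (hI3 : Integrable (fun ω => wFun lam lam' A X pr ω *
      (phiFun lam lam' A Y X pr Q0 Q1 ω - (Y1 ω - Y0 ω)) ^ 2) P)
    (hI4 : Integrable (fun ω => wFun lam lam' A X pr ω *
      (phiFun lam lam' A Y X pr Q0 Q1 ω - (Y1 ω - Y0 ω)) * (Y1 ω - Y0 ω)) P)
    (hI5 : Integrable (fun ω => wFun lam lam' A X pr ω *
      (phiFun lam lam' A Y X pr Q0 Q1 ω - (Y1 ω - Y0 ω)) * g (v (X ω))) P)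
    (hI5' : Integrable (fun ω => wFun lam lam' A X pr ω *
      (phiFun lam lam' A Y X pr Q0 Q1 ω - (Y1 ω - Y0 ω)) * g' (v (X ω))) P) :
    (∫ ω, wFun lam lam' A X pr ω *
        (phiFun lam lam' A Y X pr Q0 Q1 ω - g (v (X ω))) ^ 2 ∂P
      = ∫ ω, lam (pr (X ω)) * ((Y1 ω - Y0 ω) - g (v (X ω))) ^ 2 ∂P
        + ∫ ω, wFun lam lam' A X pr ω *
            (phiFun lam lam' A Y X pr Q0 Q1 ω - (Y1 ω - Y0 ω)) ^ 2 ∂P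
        + 2 * ∫ ω, wFun lam lam' A X pr ω *
            (phiFun lam lam' A Y X pr Q0 Q1 ω - (Y1 ω - Y0 ω)) * (Y1 ω - Y0 ω) ∂P)
    ∧ (∫ ω, wFun lam lam' A X pr ω *
        (phiFun lam lam' A Y X pr Q0 Q1 ω - g' (v (X ω))) ^ 2 ∂P
      = ∫ ω, lam (pr (X ω)) * ((Y1 ω - Y0 ω) - g' (v (X ω))) ^ 2 ∂P
        + ∫ ω, wFun lam lam' A X pr ω *
            (phiFun lam lam' A Y X pr Q0 Q1 ω - (Y1 ω - Y0 ω)) ^ 2 ∂P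
        + 2 * ∫ ω, wFun lam lam' A X pr ω *
            (phiFun lam lam' A Y X pr Q0 Q1 ω - (Y1 ω - Y0 ω)) * (Y1 ω - Y0 ω) ∂P)
    ∧ (∫ ω, wFun lam lam' A X pr ω *
          (phiFun lam lam' A Y X pr Q0 Q1 ω - g (v (X ω))) ^ 2 ∂P
        - ∫ ω, wFun lam lam' A X pr ω *
            (phiFun lam lam' A Y X pr Q0 Q1 ω - g' (v (X ω))) ^ 2 ∂P
      = ∫ ω, lam (pr (X ω)) * ((Y1 ω - Y0 ω) - g (v (X ω))) ^ 2 ∂P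
        - ∫ ω, lam (pr (X ω)) * ((Y1 ω - Y0 ω) - g' (v (X ω))) ^ 2 ∂P) := by
  have h1 := stmt11_aux P X hX v hv A Y0 Y1 Y hA hY0 hY1 hA01 hYdef pr hprm hpr hprCE hCE
    Q0 Q1 hQ0m hQ1m lam lam' hlam hlam' hw g hg hI1 hI2 hI3 hI4 hI5
  have h2 := stmt11_aux P X hX v hv A Y0 Y1 Y hA hY0 hY1 hA01 hYdef pr hprm hpr hprCE hCE
    Q0 Q1 hQ0m hQ1m lam lam' hlam hlam' hw g' hg' hI1' hI2' hI3 hI4 hI5'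
  exact ⟨h1, h2, by rw [h1, h2]; ring⟩
end

section
/- For every measurable g : 𝒱 → ℝ (with all expectations below finite), E[((A − π(X))·λ'(π(X)) + λ(π(X)))·((Y¹−Y⁰) − g(V))²] = E[λ(π(X))·((Y¹−Y⁰) − g(V))²]; i.e., replacing the weight λ(π(X)) by (A − π(X))·λ'(π(X)) + λ(π(X)) does not change the weighted oracle risk. -/
/-!
Write `p = π ∘ X` and `W = λ'(p) · (Y¹ - Y⁰ - g(V))²`, so that the two weighted risks differ by
`E[(A - p) W]`. Since `(Y⁰, Y¹) ⊥ A | X`, conditioning the event `{A = 1}` on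
`σ(X) ⊔ σ(Y⁰, Y¹)` gives the same result as conditioning it on `σ(X)`, namely `p`; hence
`E[A - p | σ(X) ⊔ σ(Y⁰, Y¹)] = 0`, and `E[(A - p) W] = 0` because `W` is
`σ(X) ⊔ σ(Y⁰, Y¹)`-measurable.
-/

open MeasureTheory ProbabilityTheory MeasurableSpace Set

section PiSystem

variable {Ω : Type*}

lemma sup_eq_generateFrom_inter (m₁ m₂ : MeasurableSpace Ω) :
    m₁ ⊔ m₂ = generateFrom
      {t | ∃ t₁ t₂, MeasurableSet[m₁] t₁ ∧ MeasurableSet[m₂] t₂ ∧ t₁ ∩ t₂ = t} := by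
  refine le_antisymm (sup_le ?_ ?_) (generateFrom_le ?_)
  · exact fun s hs => measurableSet_generateFrom ⟨s, univ, hs, .univ, inter_univ s⟩
  · exact fun s hs => measurableSet_generateFrom ⟨univ, s, .univ, hs, univ_inter s⟩
  · rintro _ ⟨t₁, t₂, ht₁, ht₂, rfl⟩
    exact (le_sup_left (b := m₂) _ ht₁).inter (le_sup_right (a := m₁) _ ht₂)

lemma isPiSystem_inter (m₁ m₂ : MeasurableSpace Ω) :
    IsPiSystem {t | ∃ t₁ t₂, MeasurableSet[m₁] t₁ ∧ MeasurableSet[m₂] t₂ ∧ t₁ ∩ t₂ = t} := by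
  rintro _ ⟨s₁, s₂, hs₁, hs₂, rfl⟩ _ ⟨t₁, t₂, ht₁, ht₂, rfl⟩ -
  exact ⟨s₁ ∩ t₁, s₂ ∩ t₂, hs₁.inter ht₁, hs₂.inter ht₂, inter_inter_inter_comm ..⟩

variable {E : Type*} [NormedAddCommGroup E] [NormedSpace ℝ E]

lemma setIntegral_eq_of_isPiSystem {m m₀ : MeasurableSpace Ω} {μ : Measure Ω} (hm : m ≤ m₀)
    {C : Set (Set Ω)} (hgen : m = generateFrom C) (hC : IsPiSystem C) {f g : Ω → E}
    (hf : Integrable f μ) (hg : Integrable g μ) (h_univ : ∫ x, f x ∂μ = ∫ x, g x ∂μ)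
    (h_eq : ∀ t ∈ C, ∫ x in t, f x ∂μ = ∫ x in t, g x ∂μ) {t : Set Ω}
    (ht : MeasurableSet[m] t) : ∫ x in t, f x ∂μ = ∫ x in t, g x ∂μ := by
  induction t, ht using induction_on_inter hgen hC with
  | empty => simp
  | basic t ht => exact h_eq t ht
  | compl t ht iht =>
    rw [setIntegral_compl (hm t ht) hf, setIntegral_compl (hm t ht) hg, iht, h_univ]
  | iUnion s hd hs ihs =>
    rw [integral_iUnion (fun i => hm _ (hs i)) hd hf.integrableOn,
      integral_iUnion (fun i => hm _ (hs i)) hd hg.integrableOn]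
    exact tsum_congr ihs

end PiSystem

section CondExp

variable {Ω : Type*} {m m₀ : MeasurableSpace Ω} {μ : Measure Ω} [IsFiniteMeasure μ]

lemma integral_mul_eq_zero_of_condExp_ae_eq_zero (hm : m ≤ m₀) {f W : Ω → ℝ}
    (hW : StronglyMeasurable[m] W) (hf : Integrable f μ) (hWf : Integrable (W * f) μ)
    (h0 : μ[f | m] =ᵐ[μ] 0) : ∫ ω, W ω * f ω ∂μ = 0 := by
  calc ∫ ω, W ω * f ω ∂μ = ∫ ω, (μ[W * f | m]) ω ∂μ := (integral_condExp hm).symm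
    _ = ∫ ω, W ω * (μ[f | m]) ω ∂μ :=
      integral_congr_ae (condExp_mul_of_stronglyMeasurable_left hW hWf hf)
    _ = ∫ ω, W ω * 0 ∂μ := integral_congr_ae (h0.mono fun ω h => congrArg (W ω * ·) h)
    _ = 0 := by simp

lemma setIntegral_inter_eq_setIntegral_condExp_indicator (hm : m ≤ m₀) {f : Ω → ℝ}
    (hf : Integrable f μ) {t₁ t₂ : Set Ω} (ht₁ : MeasurableSet[m] t₁) (ht₂ : MeasurableSet t₂) :
    ∫ ω in t₁ ∩ t₂, f ω ∂μ = ∫ ω in t₁, (μ[t₂.indicator f | m]) ω ∂μ := by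
  rw [setIntegral_condExp hm (hf.indicator ht₂) ht₁, setIntegral_indicator ht₂]

end CondExp

section CondIndep

variable {Ω : Type*} {m' m₁ m₂ mΩ : MeasurableSpace Ω} [StandardBorelSpace Ω]
  {μ : Measure Ω} [IsFiniteMeasure μ]

lemma condExp_indicator_sup_ae_eq_of_condIndep (hm' : m' ≤ mΩ) (hm₁ : m₁ ≤ mΩ)
    (hm₂ : m₂ ≤ mΩ) (hind : CondIndep m' m₁ m₂ hm' μ) {s : Set Ω} (hs : MeasurableSet[m₂] s) :
    μ⟦s | m' ⊔ m₁⟧ =ᵐ[μ] μ⟦s | m'⟧ := by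
  have hsup : m' ⊔ m₁ ≤ mΩ := sup_le hm' hm₁
  have hs_int : Integrable (s.indicator fun _ => (1 : ℝ)) μ :=
    (integrable_const 1).indicator (hm₂ s hs)
  have h_mul := (condIndep_iff m' m₁ m₂ hm' hm₁ hm₂ μ).mp hind
  refine (ae_eq_condExp_of_forall_setIntegral_eq hsup hs_int
    (fun _ _ _ => integrable_condExp.integrableOn) (fun t ht _ => ?_)
    (stronglyMeasurable_condExp.aestronglyMeasurable.mono le_sup_left)).symm
  refine setIntegral_eq_of_isPiSystem hsup (sup_eq_generateFrom_inter m' m₁)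
    (isPiSystem_inter m' m₁) integrable_condExp hs_int (integral_condExp hm') ?_ ht
  -- On `t₁ ∩ t₂` both sides integrate to `∫ in t₁, μ⟦t₂ | m'⟧ * μ⟦s | m'⟧`: for `μ⟦s | m'⟧` by
  -- pulling it out of `μ[t₂.indicator _ | m']`, for `s.indicator 1` by conditional independence.
  rintro _ ⟨t₁, t₂, ht₁, ht₂, rfl⟩
  have ht₂' : MeasurableSet t₂ := hm₁ t₂ ht₂
  rw [setIntegral_inter_eq_setIntegral_condExp_indicator hm' integrable_condExp ht₁ ht₂',
    setIntegral_inter_eq_setIntegral_condExp_indicator hm' hs_int ht₁ ht₂',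
    indicator_indicator]
  refine setIntegral_congr_ae (hm' t₁ ht₁) ?_
  have h_pull : μ[t₂.indicator (μ⟦s | m'⟧) | m'] =ᵐ[μ] μ⟦s | m'⟧ * μ⟦t₂ | m'⟧ := by
    have h_eq : t₂.indicator (μ⟦s | m'⟧) = μ⟦s | m'⟧ * t₂.indicator fun _ => (1 : ℝ) := by
      ext ω; by_cases h : ω ∈ t₂ <;> simp [h]
    rw [h_eq]
    exact condExp_mul_of_stronglyMeasurable_left stronglyMeasurable_condExp
      (h_eq ▸ integrable_condExp.indicator ht₂') ((integrable_const 1).indicator ht₂')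
  filter_upwards [h_pull, h_mul t₂ s ht₂ hs] with ω h₁ h₂ _
  rw [h₁, h₂, Pi.mul_apply, Pi.mul_apply, mul_comm]

lemma integral_mul_indicator_sub_condExp_eq_zero_of_condIndep (hm' : m' ≤ mΩ) (hm₁ : m₁ ≤ mΩ)
    (hm₂ : m₂ ≤ mΩ) (hind : CondIndep m' m₁ m₂ hm' μ) {s : Set Ω} (hs : MeasurableSet[m₂] s)
    {W : Ω → ℝ} (hW : StronglyMeasurable[m' ⊔ m₁] W)
    (hWs : Integrable (W * (s.indicator (fun _ => 1) - μ⟦s | m'⟧)) μ) :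
    ∫ ω, W ω * (s.indicator (fun _ => (1 : ℝ)) ω - (μ⟦s | m'⟧) ω) ∂μ = 0 := by
  have hs_int : Integrable (s.indicator fun _ => (1 : ℝ)) μ :=
    (integrable_const 1).indicator (hm₂ s hs)
  refine integral_mul_eq_zero_of_condExp_ae_eq_zero (f := s.indicator (fun _ => 1) - μ⟦s | m'⟧)
    (sup_le hm' hm₁) hW (hs_int.sub integrable_condExp) hWs ?_
  have h_fixed : μ[μ⟦s | m'⟧ | m' ⊔ m₁] = μ⟦s | m'⟧ :=
    condExp_of_stronglyMeasurable (sup_le hm' hm₁)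
      (stronglyMeasurable_condExp.mono le_sup_left) integrable_condExp
  filter_upwards [condExp_sub hs_int integrable_condExp (m' ⊔ m₁),
    condExp_indicator_sup_ae_eq_of_condIndep hm' hm₁ hm₂ hind hs] with ω h₁ h₂
  rw [h₁, Pi.sub_apply, h_fixed, h₂, sub_self, Pi.zero_apply]

lemma integral_sub_condExp_mul_eq_zero_of_condIndepFun {β : Type*} [MeasurableSpace β]
    (hm' : m' ≤ mΩ) {U : Ω → β} (hU : Measurable U) {A : Ω → ℝ} (hA : Measurable A)
    (hA01 : ∀ ω, A ω = 0 ∨ A ω = 1) (hind : CondIndepFun m' hm' U A μ) {W : Ω → ℝ}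
    (hW : StronglyMeasurable[m' ⊔ MeasurableSpace.comap U inferInstance] W)
    (hAW : Integrable (fun ω => (A ω - (μ[A | m']) ω) * W ω) μ) :
    ∫ ω, (A ω - (μ[A | m']) ω) * W ω ∂μ = 0 := by
  have hA_ind : A = (A ⁻¹' {1}).indicator fun _ => 1 := by
    ext ω; rcases hA01 ω with h | h <;> simp [h]
  have h_eq : (fun ω => (A ω - (μ[A | m']) ω) * W ω)
      = W * ((A ⁻¹' {1}).indicator (fun _ => 1) - μ⟦A ⁻¹' {1} | m'⟧) := by
    ext ω; rw [Pi.mul_apply, Pi.sub_apply, ← hA_ind, mul_comm]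
  rw [h_eq] at hAW ⊢
  exact integral_mul_indicator_sub_condExp_eq_zero_of_condIndep hm' hU.comap_le hA.comap_le
    ((condIndepFun_iff_condIndep _ _ _ _ _).mp hind) ⟨{1}, measurableSet_singleton 1, rfl⟩ hW hAW

end CondIndep

theorem stmt13_general {Ω 𝓧 𝓥 : Type*} [MeasurableSpace Ω] [StandardBorelSpace Ω]
    [MeasurableSpace 𝓧] [MeasurableSpace 𝓥]
    (P : Measure Ω) [IsProbabilityMeasure P]
    (X : Ω → 𝓧) (hX : Measurable X) (v : 𝓧 → 𝓥) (hv : Measurable v)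
    (A Y0 Y1 : Ω → ℝ) (hA : Measurable A) (hY0 : Measurable Y0) (hY1 : Measurable Y1)
    (hA01 : ∀ ω, A ω = 0 ∨ A ω = 1)
    (pr : 𝓧 → ℝ) (hprm : Measurable pr)
    (hprCE : (fun ω => pr (X ω)) =ᵐ[P] P[A | MeasurableSpace.comap X inferInstance])
    (hCE : CondIndepFun (MeasurableSpace.comap X inferInstance) hX.comap_le
      (fun ω => (Y0 ω, Y1 ω)) A P)
    (lam lam' : ℝ → ℝ) (hlam' : Continuous lam')
    (g : 𝓥 → ℝ) (hg : Measurable g)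
    (hI1 : Integrable (fun ω =>
      ((A ω - pr (X ω)) * lam' (pr (X ω)) + lam (pr (X ω)))
        * ((Y1 ω - Y0 ω) - g (v (X ω))) ^ 2) P)
    (hI2 : Integrable (fun ω => lam (pr (X ω)) * ((Y1 ω - Y0 ω) - g (v (X ω))) ^ 2) P) :
    ∫ ω, ((A ω - pr (X ω)) * lam' (pr (X ω)) + lam (pr (X ω)))
        * ((Y1 ω - Y0 ω) - g (v (X ω))) ^ 2 ∂P
      = ∫ ω, lam (pr (X ω)) * ((Y1 ω - Y0 ω) - g (v (X ω))) ^ 2 ∂P := by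
  set W : Ω → ℝ := fun ω => lam' (pr (X ω)) * ((Y1 ω - Y0 ω) - g (v (X ω))) ^ 2
  set mX := MeasurableSpace.comap X inferInstance
  set mY := MeasurableSpace.comap (fun ω => (Y0 ω, Y1 ω)) inferInstance
  have hW : StronglyMeasurable[mX ⊔ mY] W := by
    have hXm : Measurable[mX ⊔ mY] X := (comap_measurable X).mono le_sup_left le_rfl
    have hYm : Measurable[mX ⊔ mY] fun ω => (Y0 ω, Y1 ω) :=
      (comap_measurable _).mono le_sup_right le_rfl
    have h_diff : Measurable[mX ⊔ mY] fun ω => (Y1 ω - Y0 ω) - g (v (X ω)) :=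
      ((measurable_snd.comp hYm).sub (measurable_fst.comp hYm)).sub (hg.comp (hv.comp hXm))
    exact ((hlam'.measurable.comp (hprm.comp hXm)).mul (h_diff.pow_const 2)).stronglyMeasurable
  have h_sub : (fun ω => (A ω - pr (X ω)) * W ω) =ᵐ[P] fun ω => (A ω - (P[A | mX]) ω) * W ω := by
    filter_upwards [hprCE] with ω h
    rw [h]
  have h_int : Integrable (fun ω => (A ω - pr (X ω)) * W ω) P :=
    (hI1.sub hI2).congr (.of_forall fun ω => by simp only [W, Pi.sub_apply]; ring)
  have h_zero : ∫ ω, (A ω - pr (X ω)) * W ω ∂P = 0 := by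
    rw [integral_congr_ae h_sub]
    exact integral_sub_condExp_mul_eq_zero_of_condIndepFun hX.comap_le (hY0.prodMk hY1) hA hA01
      hCE hW (h_int.congr h_sub)
  calc _ = ∫ ω, ((A ω - pr (X ω)) * W ω
          + lam (pr (X ω)) * ((Y1 ω - Y0 ω) - g (v (X ω))) ^ 2) ∂P :=
        integral_congr_ae (.of_forall fun ω => by simp only [W]; ring)
    _ = _ := by rw [integral_add h_int hI2, h_zero, zero_add]

/-- replacing the weight `λ(π(X))` by
`(A − π(X))·λ'(π(X)) + λ(π(X))` does not change the weighted oracle risk. -/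
theorem stmt13 {Ω 𝓧 𝓥 : Type*} [MeasurableSpace Ω] [StandardBorelSpace Ω]
    [MeasurableSpace 𝓧] [MeasurableSpace 𝓥]
    (P : Measure Ω) [IsProbabilityMeasure P]
    (X : Ω → 𝓧) (hX : Measurable X) (v : 𝓧 → 𝓥) (hv : Measurable v)
    (A Y0 Y1 : Ω → ℝ) (hA : Measurable A) (hY0 : Measurable Y0) (hY1 : Measurable Y1)
    (hA01 : ∀ ω, A ω = 0 ∨ A ω = 1)
    (pr : 𝓧 → ℝ) (hprm : Measurable pr) (hpr : ∀ x, 0 < pr x ∧ pr x < 1)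
    (hprCE : (fun ω => pr (X ω)) =ᵐ[P] P[A | MeasurableSpace.comap X inferInstance])
    (hCE : CondIndepFun (MeasurableSpace.comap X inferInstance) hX.comap_le
      (fun ω => (Y0 ω, Y1 ω)) A P)
    (lam lam' : ℝ → ℝ) (hlam : ∀ p, HasDerivAt lam (lam' p) p) (hlam' : Continuous lam')
    (g : 𝓥 → ℝ) (hg : Measurable g)
    (hI1 : Integrable (fun ω =>
      ((A ω - pr (X ω)) * lam' (pr (X ω)) + lam (pr (X ω)))
        * ((Y1 ω - Y0 ω) - g (v (X ω))) ^ 2) P)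
    (hI2 : Integrable (fun ω => lam (pr (X ω)) * ((Y1 ω - Y0 ω) - g (v (X ω))) ^ 2) P) :
    ∫ ω, ((A ω - pr (X ω)) * lam' (pr (X ω)) + lam (pr (X ω)))
        * ((Y1 ω - Y0 ω) - g (v (X ω))) ^ 2 ∂P
      = ∫ ω, lam (pr (X ω)) * ((Y1 ω - Y0 ω) - g (v (X ω))) ^ 2 ∂P :=
  stmt13_general P X hX v hv A Y0 Y1 hA hY0 hY1 hA01 pr hprm hprCE hCE lam lam' hlam' g hg hI1 hI2
end
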